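/- Let 0 < γ < 1 and T_b ∈ (0, ∞]. Suppose f : ℝ → ℝ is nondecreasing, Lipschitz on every bounded interval, and satisfies f(0) ≥ 0. Let v : [0, T_b) → ℝ be a continuous function with v(0) ≥ 0 satisfying v(t) = v(0) + (1/Γ(γ)) ∫_0^t (t−s)^{γ−1} f(v(s)) ds for all t ∈ [0, T_b). Then v is nondecreasing on [0, T_b); in particular v(t) ≥ v(0) ≥ 0 for all t ∈ [0, T_b). -/

import Mathlib

/-!
Everything rests on one comparison principle for the Riemann–Liouville integral `I^γ`: if
`e ≤ c • I^γ g` with `g ≤ L • e⁺`, then `e⁺ ≤ c L • I^γ e⁺`, and this singular Gronwall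
inequality forces `e⁺ = 0`. (On a window of length `δ` beyond the zero set of `e⁺` the kernel has
mass `δ^γ / γ`, so for small `δ` the maximum of `e⁺` there is at most half of itself.)
A nondecreasing `f` that is `L`-Lipschitz on the range of the functions involved satisfies
`f x - f y ≤ L (x - y)⁺`, so the principle applies to differences of solutions.

Taking `e = -v` and using `f 0 ≥ 0` gives `v ≥ 0`. For `a ≤ T`, taking `e s = v s - v (s + T - a)`
gives `v a ≤ v T`: the integral defining `v (s + T - a)` splits into a history part over
`[0, T - a]`, nonnegative because `f ∘ v ≥ 0`, and the Volterra integral of the shifted function.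
-/

open MeasureTheory Set
open scoped ENNReal

/-- The Riemann–Liouville integral of order `γ` from `0`, without its factor `1 / Γ(γ)`. -/
noncomputable def rlIntegral (γ : ℝ) (g : ℝ → ℝ) (t : ℝ) : ℝ :=
  ∫ s in (0:ℝ)..t, (t - s) ^ (γ - 1) * g s

section Kernel

variable {γ : ℝ} {g h : ℝ → ℝ} {a t : ℝ}

theorem intervalIntegrable_sub_rpow (hγ : 0 < γ) (t a b : ℝ) :
    IntervalIntegrable (fun s => (t - s) ^ (γ - 1)) volume a b := by
  simpa using (intervalIntegral.intervalIntegrable_rpow' (a := t - a) (b := t - b) (r := γ - 1)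
    (by linarith)).comp_sub_left t

theorem intervalIntegrable_sub_rpow_mul (hγ : 0 < γ) {b : ℝ} (hg : ContinuousOn g (uIcc a b)) :
    IntervalIntegrable (fun s => (t - s) ^ (γ - 1) * g s) volume a b :=
  (intervalIntegrable_sub_rpow hγ t a b).mul_continuousOn hg

theorem integral_sub_rpow (hγ : 0 < γ) (a t : ℝ) :
    ∫ s in a..t, (t - s) ^ (γ - 1) = (t - a) ^ γ / γ := by
  rw [intervalIntegral.integral_comp_sub_left (fun x => x ^ (γ - 1)) t,
    integral_rpow (Or.inl (by linarith))]
  simp [Real.zero_rpow hγ.ne']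

theorem rlIntegral_nonneg (ht : 0 ≤ t) (hg : ∀ s ∈ Icc 0 t, 0 ≤ g s) :
    0 ≤ rlIntegral γ g t :=
  intervalIntegral.integral_nonneg ht fun s hs =>
    mul_nonneg (Real.rpow_nonneg (by linarith [hs.2]) _) (hg s hs)

theorem rlIntegral_mono (hγ : 0 < γ) (ht : 0 ≤ t) (hg : ContinuousOn g (Icc 0 t))
    (hh : ContinuousOn h (Icc 0 t)) (hgh : ∀ s ∈ Icc 0 t, g s ≤ h s) :
    rlIntegral γ g t ≤ rlIntegral γ h t := by
  rw [← uIcc_of_le ht] at hg hh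
  exact intervalIntegral.integral_mono_on ht (intervalIntegrable_sub_rpow_mul hγ hg)
    (intervalIntegrable_sub_rpow_mul hγ hh) fun s hs =>
      mul_le_mul_of_nonneg_left (hgh s hs) (Real.rpow_nonneg (by linarith [hs.2]) _)

theorem rlIntegral_sub (hγ : 0 < γ) (ht : 0 ≤ t) (hg : ContinuousOn g (Icc 0 t))
    (hh : ContinuousOn h (Icc 0 t)) :
    rlIntegral γ (fun s => g s - h s) t = rlIntegral γ g t - rlIntegral γ h t := by
  rw [← uIcc_of_le ht] at hg hh
  simp only [rlIntegral, mul_sub]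
  exact intervalIntegral.integral_sub (intervalIntegrable_sub_rpow_mul hγ hg)
    (intervalIntegrable_sub_rpow_mul hγ hh)

theorem rlIntegral_const_mul (γ L : ℝ) (g : ℝ → ℝ) (t : ℝ) :
    rlIntegral γ (fun s => L * g s) t = L * rlIntegral γ g t := by
  simp only [rlIntegral, mul_left_comm _ L, intervalIntegral.integral_const_mul]

theorem rlIntegral_le_of_eqOn_zero (hγ : 0 < γ) {M : ℝ} (ha : 0 ≤ a) (hat : a ≤ t)
    (hg : ContinuousOn g (Icc 0 t)) (hg0 : EqOn g 0 (Icc 0 a)) (hgM : ∀ s ∈ Icc a t, g s ≤ M) :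
    rlIntegral γ g t ≤ (t - a) ^ γ / γ * M := by
  have hint : ∀ {b c}, Icc b c ⊆ Icc 0 t → b ≤ c →
      IntervalIntegrable (fun s => (t - s) ^ (γ - 1) * g s) volume b c := fun hsub hbc =>
    intervalIntegrable_sub_rpow_mul hγ (hg.mono (by rwa [uIcc_of_le hbc]))
  have hhead : ∫ s in (0:ℝ)..a, (t - s) ^ (γ - 1) * g s = 0 := by
    rw [intervalIntegral.integral_congr (g := fun _ => (0:ℝ)), intervalIntegral.integral_zero]
    intro s hs
    rw [uIcc_of_le ha] at hs
    simp [hg0 hs]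
  rw [rlIntegral, ← intervalIntegral.integral_add_adjacent_intervals
    (hint (Icc_subset_Icc le_rfl hat) ha) (hint (Icc_subset_Icc ha le_rfl) hat), hhead, zero_add,
    ← integral_sub_rpow hγ, ← intervalIntegral.integral_mul_const]
  exact intervalIntegral.integral_mono_on hat (hint (Icc_subset_Icc ha le_rfl) hat)
    ((intervalIntegrable_sub_rpow hγ t a t).mul_const M) fun s hs =>
      mul_le_mul_of_nonneg_left (hgM s hs) (Real.rpow_nonneg (by linarith [hs.2]) _)

theorem rlIntegral_comp_add_le (hγ : 0 < γ) {d : ℝ} (ht : 0 ≤ t) (hd : 0 ≤ d)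
    (hg : ContinuousOn g (Icc 0 (t + d))) (hg0 : ∀ s ∈ Icc 0 d, 0 ≤ g s) :
    rlIntegral γ (fun s => g (s + d)) t ≤ rlIntegral γ g (t + d) := by
  have hint : ∀ {b c}, Icc b c ⊆ Icc 0 (t + d) → b ≤ c →
      IntervalIntegrable (fun s => (t + d - s) ^ (γ - 1) * g s) volume b c := fun hsub hbc =>
    intervalIntegrable_sub_rpow_mul hγ (hg.mono (by rwa [uIcc_of_le hbc]))
  have hshift : rlIntegral γ (fun s => g (s + d)) t
      = ∫ s in d..t + d, (t + d - s) ^ (γ - 1) * g s := by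
    simpa only [rlIntegral, add_sub_add_right_eq_sub, zero_add] using
      intervalIntegral.integral_comp_add_right (a := 0) (b := t)
        (fun s => (t + d - s) ^ (γ - 1) * g s) d
  have hhead : 0 ≤ ∫ s in (0:ℝ)..d, (t + d - s) ^ (γ - 1) * g s :=
    intervalIntegral.integral_nonneg hd fun s hs =>
      mul_nonneg (Real.rpow_nonneg (by linarith [hs.2]) _) (hg0 s hs)
  rw [hshift, rlIntegral, ← intervalIntegral.integral_add_adjacent_intervals
    (hint (Icc_subset_Icc le_rfl (by linarith)) hd)
    (hint (Icc_subset_Icc hd le_rfl) (by linarith))]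
  linarith

end Kernel

section Gronwall

variable {γ C T : ℝ} {u : ℝ → ℝ}

theorem exists_pos_mul_rpow_div_le_half (hγ : 0 < γ) (hC : 0 ≤ C) :
    ∃ δ > 0, C * (δ ^ γ / γ) ≤ 1 / 2 := by
  refine ⟨(γ / (2 * (C + 1))) ^ γ⁻¹, by positivity, ?_⟩
  rw [Real.rpow_inv_rpow (by positivity) hγ.ne', div_div_cancel_left' hγ.ne', ← div_eq_mul_inv,
    div_le_iff₀ (by positivity)]
  linarith

theorem eqOn_zero_of_le_rlIntegral_step (hγ : 0 < γ) (hC : 0 ≤ C)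
    (hu : ContinuousOn u (Icc 0 T)) (hu0 : ∀ t ∈ Icc 0 T, 0 ≤ u t)
    (hle : ∀ t ∈ Icc 0 T, u t ≤ C * rlIntegral γ u t) {a δ : ℝ} (ha : 0 ≤ a)
    (hδ : C * (δ ^ γ / γ) ≤ 1 / 2) (hzero : ∀ t ∈ Icc 0 T, t ≤ a → u t = 0) :
    ∀ t ∈ Icc 0 T, t ≤ a + δ → u t = 0 := by
  intro t ht hta
  have htb : t ∈ Icc 0 (min (a + δ) T) := ⟨ht.1, le_min hta ht.2⟩
  have hbT : Icc 0 (min (a + δ) T) ⊆ Icc 0 T := Icc_subset_Icc le_rfl (min_le_right _ _)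
  obtain ⟨t', ht', hmax⟩ := isCompact_Icc.exists_isMaxOn ⟨t, htb⟩ (hu.mono hbT)
  suffices u t' ≤ 0 from le_antisymm ((hmax htb).trans this) (hu0 t ht)
  rcases le_or_gt t' a with hat' | hat'
  · exact (hzero t' (hbT ht') hat').le
  have ht'δ : t' - a ≤ δ := by linarith [ht'.2.trans (min_le_left _ _)]
  have hM : 0 ≤ u t' := hu0 t' (hbT ht')
  have hrl : rlIntegral γ u t' ≤ (t' - a) ^ γ / γ * u t' :=
    rlIntegral_le_of_eqOn_zero hγ ha hat'.le (hu.mono (Icc_subset_Icc le_rfl (hbT ht').2))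
      (fun s hs => hzero s ⟨hs.1, hs.2.trans (hat'.le.trans (hbT ht').2)⟩ hs.2)
      fun s hs => hmax ⟨ha.trans hs.1, hs.2.trans ht'.2⟩
  have : u t' ≤ 1 / 2 * u t' :=
    calc u t' ≤ C * rlIntegral γ u t' := hle t' (hbT ht')
      _ ≤ C * ((t' - a) ^ γ / γ) * u t' := by rw [mul_assoc]; gcongr
      _ ≤ C * (δ ^ γ / γ) * u t' := by gcongr
      _ ≤ 1 / 2 * u t' := by gcongr
  linarith

theorem eqOn_zero_of_le_rlIntegral (hγ : 0 < γ) (hC : 0 ≤ C) (hu : ContinuousOn u (Icc 0 T))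
    (hu0 : ∀ t ∈ Icc 0 T, 0 ≤ u t) (hle : ∀ t ∈ Icc 0 T, u t ≤ C * rlIntegral γ u t) :
    EqOn u 0 (Icc 0 T) := by
  obtain ⟨δ, hδ, hCδ⟩ := exists_pos_mul_rpow_div_le_half hγ hC
  have hstep : ∀ n : ℕ, ∀ t ∈ Icc 0 T, t ≤ n * δ → u t = 0 := by
    intro n
    induction n with
    | zero =>
      intro t ht ht0
      obtain rfl : t = 0 := le_antisymm (by simpa using ht0) ht.1
      have h0 := hle 0 ht
      simp only [rlIntegral, intervalIntegral.integral_same, mul_zero] at h0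
      exact le_antisymm h0 (hu0 0 ht)
    | succ n ih =>
      simpa only [Nat.cast_succ, add_mul, one_mul] using
        eqOn_zero_of_le_rlIntegral_step hγ hC hu hu0 hle (by positivity) hCδ ih
  intro t ht
  obtain ⟨n, hn⟩ := exists_nat_ge (t / δ)
  exact hstep n t ht (by rwa [div_le_iff₀ hδ] at hn)

theorem nonpos_of_le_rlIntegral (hγ : 0 < γ) {c L : ℝ} (hc : 0 ≤ c) (hL : 0 ≤ L) {e g : ℝ → ℝ}
    (he : ContinuousOn e (Icc 0 T)) (hg : ContinuousOn g (Icc 0 T))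
    (hge : ∀ s ∈ Icc 0 T, g s ≤ L * max (e s) 0)
    (heg : ∀ t ∈ Icc 0 T, e t ≤ c * rlIntegral γ g t) : ∀ t ∈ Icc 0 T, e t ≤ 0 := by
  have hpos : ContinuousOn (fun s => max (e s) 0) (Icc 0 T) := he.sup continuousOn_const
  have hcL : 0 ≤ c * L := mul_nonneg hc hL
  suffices EqOn (fun s => max (e s) 0) 0 (Icc 0 T) from
    fun t ht => (le_max_left _ _).trans (this ht).le
  refine eqOn_zero_of_le_rlIntegral hγ hcL hpos (fun _ _ => le_max_right _ _) fun t ht => ?_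
  have hsub : Icc 0 t ⊆ Icc 0 T := Icc_subset_Icc le_rfl ht.2
  refine max_le ?_ (mul_nonneg hcL (rlIntegral_nonneg ht.1 fun _ _ => le_max_right _ _))
  calc e t ≤ c * rlIntegral γ g t := heg t ht
    _ ≤ c * rlIntegral γ (fun s => L * max (e s) 0) t := by
      gcongr
      exact rlIntegral_mono hγ ht.1 (hg.mono hsub) (continuousOn_const.mul (hpos.mono hsub))
        fun s hs => hge s (hsub hs)
    _ = c * L * rlIntegral γ (fun s => max (e s) 0) t := by rw [rlIntegral_const_mul, mul_assoc]

end Gronwall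

theorem Monotone.sub_le_mul_max_sub_of_abs_sub_le {f : ℝ → ℝ} (hf : Monotone f) {L x y : ℝ}
    (hxy : |f x - f y| ≤ L * |x - y|) : f x - f y ≤ L * max (x - y) 0 := by
  rcases le_total x y with h | h
  · rw [max_eq_right (sub_nonpos.2 h), mul_zero]
    exact sub_nonpos.2 (hf h)
  · rw [max_eq_left (sub_nonneg.2 h), ← abs_of_nonneg (sub_nonneg.2 h)]
    exact (le_abs_self _).trans hxy

theorem ContinuousOn.comp_of_abs_sub_le {f v : ℝ → ℝ} {L : ℝ} {S s : Set ℝ}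
    (hfL : ∀ x ∈ S, ∀ y ∈ S, |f x - f y| ≤ L * |x - y|) (hv : ContinuousOn v s)
    (hvS : MapsTo v s S) : ContinuousOn (fun t => f (v t)) s :=
  (LipschitzOnWith.of_dist_le' fun x hx y hy => by
    simpa only [Real.dist_eq] using hfL x hx y hy).continuousOn.comp hv hvS

section Volterra

variable {γ c L M T : ℝ} {f v : ℝ → ℝ}

theorem volterra_nonneg (hγ : 0 < γ) (hc : 0 ≤ c) (hL : 0 ≤ L) (hM : 0 ≤ M) (hf : Monotone f)
    (hf0 : 0 ≤ f 0) (hfL : ∀ x ∈ Icc (-M) M, ∀ y ∈ Icc (-M) M, |f x - f y| ≤ L * |x - y|)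
    (hv : ContinuousOn v (Icc 0 T)) (hvM : MapsTo v (Icc 0 T) (Icc (-M) M)) (hv0 : 0 ≤ v 0)
    (hvol : ∀ t ∈ Icc 0 T, v t = v 0 + c * rlIntegral γ (fun s => f (v s)) t) :
    ∀ t ∈ Icc 0 T, 0 ≤ v t := by
  have hfv := ContinuousOn.comp_of_abs_sub_le hfL hv hvM
  have h0M : (0:ℝ) ∈ Icc (-M) M := ⟨by linarith, hM⟩
  have key := nonpos_of_le_rlIntegral hγ hc hL (e := fun s => 0 - v s)
    (g := fun s => f 0 - f (v s)) (continuousOn_const.sub hv) (continuousOn_const.sub hfv)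
    (fun s hs => hf.sub_le_mul_max_sub_of_abs_sub_le (hfL 0 h0M _ (hvM hs))) fun t ht => ?_
  · exact fun t ht => by linarith [key t ht]
  have hsub : Icc 0 t ⊆ Icc 0 T := Icc_subset_Icc le_rfl ht.2
  have hf0t : 0 ≤ rlIntegral γ (fun _ => f 0) t := rlIntegral_nonneg ht.1 fun _ _ => hf0
  rw [rlIntegral_sub hγ ht.1 continuousOn_const (hfv.mono hsub), hvol t ht]
  linarith [mul_nonneg hc hf0t]

theorem volterra_le_of_mem_Icc (hγ : 0 < γ) (hc : 0 ≤ c) (hL : 0 ≤ L) (hM : 0 ≤ M)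
    (hf : Monotone f) (hf0 : 0 ≤ f 0)
    (hfL : ∀ x ∈ Icc (-M) M, ∀ y ∈ Icc (-M) M, |f x - f y| ≤ L * |x - y|)
    (hv : ContinuousOn v (Icc 0 T)) (hvM : MapsTo v (Icc 0 T) (Icc (-M) M)) (hv0 : 0 ≤ v 0)
    (hvol : ∀ t ∈ Icc 0 T, v t = v 0 + c * rlIntegral γ (fun s => f (v s)) t) {a : ℝ}
    (ha : a ∈ Icc 0 T) : v a ≤ v T := by
  have hnn := volterra_nonneg hγ hc hL hM hf hf0 hfL hv hvM hv0 hvol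
  have hfv := ContinuousOn.comp_of_abs_sub_le hfL hv hvM
  have hsub : Icc 0 a ⊆ Icc 0 T := Icc_subset_Icc le_rfl ha.2
  have hshift : MapsTo (· + (T - a)) (Icc 0 a) (Icc 0 T) := fun s hs =>
    ⟨by linarith [hs.1, ha.2], by linarith [hs.2]⟩
  have hshiftc : ContinuousOn (· + (T - a)) (Icc 0 a) := continuousOn_id.add continuousOn_const
  have hvd : ContinuousOn (fun s => v (s + (T - a))) (Icc 0 a) := hv.comp hshiftc hshift
  have hfvd : ContinuousOn (fun s => f (v (s + (T - a)))) (Icc 0 a) := hfv.comp hshiftc hshift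
  have key := nonpos_of_le_rlIntegral hγ hc hL (e := fun s => v s - v (s + (T - a)))
    (g := fun s => f (v s) - f (v (s + (T - a)))) ((hv.mono hsub).sub hvd)
    ((hfv.mono hsub).sub hfvd)
    (fun s hs => hf.sub_le_mul_max_sub_of_abs_sub_le (hfL _ (hvM (hsub hs)) _ (hvM (hshift hs))))
    (fun t ht => ?_) a ⟨ha.1, le_rfl⟩
  · simpa using key
  have htT : Icc 0 t ⊆ Icc 0 a := Icc_subset_Icc le_rfl ht.2
  have htd : t + (T - a) ∈ Icc 0 T := hshift ht
  have hhist := rlIntegral_comp_add_le hγ ht.1 (sub_nonneg.2 ha.2)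
    (hfv.mono (Icc_subset_Icc le_rfl htd.2))
    fun s hs => hf0.trans (hf (hnn s ⟨hs.1, hs.2.trans (by linarith [ha.1])⟩))
  rw [rlIntegral_sub hγ ht.1 (hfv.mono (htT.trans hsub)) (hfvd.mono htT),
    hvol t (hsub ht), hvol _ htd]
  linarith [mul_le_mul_of_nonneg_left hhist hc]

end Volterra

theorem fode_monotone_solution_general
    (γ : ℝ) (hγ0 : 0 < γ) (Tb : ℝ≥0∞)
    (f : ℝ → ℝ)
    (hfmono : Monotone f)
    (hflip : ∀ M > (0:ℝ), ∃ L > (0:ℝ), ∀ x ∈ Icc (-M) M, ∀ y ∈ Icc (-M) M,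
      |f x - f y| ≤ L * |x - y|)
    (hf0 : 0 ≤ f 0)
    (v : ℝ → ℝ)
    (hvc : ContinuousOn v {t : ℝ | 0 ≤ t ∧ ENNReal.ofReal t < Tb})
    (hv0 : 0 ≤ v 0)
    (hv : ∀ t : ℝ, 0 ≤ t → ENNReal.ofReal t < Tb →
      v t = v 0 + (1 / Real.Gamma γ) *
        ∫ s in (0:ℝ)..t, (t - s) ^ (γ - 1) * f (v s)) :
    MonotoneOn v {t : ℝ | 0 ≤ t ∧ ENNReal.ofReal t < Tb} ∧
    ∀ t : ℝ, 0 ≤ t → ENNReal.ofReal t < Tb → v 0 ≤ v t := by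
  have hmono : MonotoneOn v {t : ℝ | 0 ≤ t ∧ ENNReal.ofReal t < Tb} := by
    intro t₁ h₁ t₂ h₂ h12
    have hsub : Icc 0 t₂ ⊆ {t : ℝ | 0 ≤ t ∧ ENNReal.ofReal t < Tb} := fun s hs =>
      ⟨hs.1, (ENNReal.ofReal_le_ofReal hs.2).trans_lt h₂.2⟩
    obtain ⟨B, hB⟩ := isCompact_Icc.exists_bound_of_continuousOn (hvc.mono hsub)
    obtain ⟨L, hL, hfL⟩ := hflip (|B| + 1) (by positivity)
    exact volterra_le_of_mem_Icc hγ0 (one_div_pos.2 (Real.Gamma_pos_of_pos hγ0)).le hL.le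
      (by positivity) hfmono hf0 hfL (hvc.mono hsub)
      (fun s hs => abs_le.1 ((hB s hs).trans (by linarith [le_abs_self B])))
      hv0 (fun t ht => hv t ht.1 (hsub ht).2) ⟨h₁.1, h12⟩
  exact ⟨hmono, fun t ht htb =>
    hmono ⟨le_rfl, (ENNReal.ofReal_le_ofReal ht).trans_lt htb⟩ ⟨ht, htb⟩ ht⟩

/-- Monotonicity of solutions of `D_c^γ v = f(v)`: for `0 < γ < 1`, `T_b ∈ (0,∞]`,
`f : ℝ → ℝ` nondecreasing, Lipschitz on every bounded interval, with `f(0) ≥ 0`;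
if `v` is continuous on `[0,T_b)` with `v(0) ≥ 0` and satisfies the Volterra equation
`v(t) = v(0) + (1/Γ(γ)) ∫_0^t (t−s)^{γ−1} f(v(s)) ds` on `[0,T_b)`, then `v` is
nondecreasing on `[0,T_b)`; in particular `v(t) ≥ v(0) ≥ 0` there. -/
theorem fode_monotone_solution
    (γ : ℝ) (hγ0 : 0 < γ) (hγ1 : γ < 1) (Tb : ℝ≥0∞) (hTb : 0 < Tb)
    (f : ℝ → ℝ)
    (hfmono : Monotone f)
    (hflip : ∀ M > (0:ℝ), ∃ L > (0:ℝ), ∀ x ∈ Icc (-M) M, ∀ y ∈ Icc (-M) M,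
      |f x - f y| ≤ L * |x - y|)
    (hf0 : 0 ≤ f 0)
    (v : ℝ → ℝ)
    (hvc : ContinuousOn v {t : ℝ | 0 ≤ t ∧ ENNReal.ofReal t < Tb})
    (hv0 : 0 ≤ v 0)
    (hv : ∀ t : ℝ, 0 ≤ t → ENNReal.ofReal t < Tb →
      v t = v 0 + (1 / Real.Gamma γ) *
        ∫ s in (0:ℝ)..t, (t - s) ^ (γ - 1) * f (v s)) :
    MonotoneOn v {t : ℝ | 0 ≤ t ∧ ENNReal.ofReal t < Tb} ∧
    ∀ t : ℝ, 0 ≤ t → ENNReal.ofReal t < Tb → v 0 ≤ v t :=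
  fode_monotone_solution_general γ hγ0 Tb f hfmono hflip hf0 v hvc hv0 hv
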